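/- Suppose for some n > 0 the eigenfunction is f(x) = A(n)e^{nx} with A(n) ≠ 0, and the interface conditions f'(a) = (−nE_a(n)/σ(n) + μ_L n/μ)f(a) and f'(b) = (nE_b(n)/σ(n) − μ_R n/μ)f(b) hold with σ(n) ≠ 0 and μ > 0. Then E_a(n)/(μ_L − μ) = E_b(n)/(μ_R + μ), provided μ_L ≠ μ and μ_R + μ ≠ 0. -/
import Mathlib

open Real Filter Topology

theorem stmt_14 (n μL μ μR σ Ea Eb An a b : ℝ) (hn : 0 < n) (hμ : 0 < μ)
    (hσ : σ ≠ 0) (hAn : An ≠ 0)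
    (f : ℝ → ℝ) (hf : ∀ x, f x = An * Real.exp (n * x))
    (hfa : deriv f a = (-n * Ea / σ + μL * n / μ) * f a)
    (hfb : deriv f b = (n * Eb / σ - μR * n / μ) * f b)
    (hL : μL ≠ μ) (hR : μR + μ ≠ 0) :
    Ea / (μL - μ) = Eb / (μR + μ) := by
  have hfe : f = fun x => An * Real.exp (n * x) := funext hf
  subst hfe
  have hd : ∀ x : ℝ, deriv (fun x => An * Real.exp (n * x)) x
      = An * n * Real.exp (n * x) := by
    intro x
    have h : HasDerivAt (fun x => An * Real.exp (n * x))
        (An * (Real.exp (n * x) * (n * 1))) x :=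
      (((hasDerivAt_id x).const_mul n).exp).const_mul An
    rw [h.deriv]; ring
  rw [hd] at hfa hfb
  have hea : Real.exp (n * a) ≠ 0 := (Real.exp_pos _).ne'
  have heb : Real.exp (n * b) ≠ 0 := (Real.exp_pos _).ne'
  have ha : n = -n * Ea / σ + μL * n / μ :=
    mul_right_cancel₀ (b := An * Real.exp (n * a)) (mul_ne_zero hAn hea)
      (by beta_reduce at hfa; linear_combination hfa)
  have hb : n = n * Eb / σ - μR * n / μ :=
    mul_right_cancel₀ (b := An * Real.exp (n * b)) (mul_ne_zero hAn heb)
      (by beta_reduce at hfb; linear_combination hfb)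
  have hLm : μL - μ ≠ 0 := sub_ne_zero.mpr hL
  have hμ' : μ ≠ 0 := hμ.ne'
  have hn' : n ≠ 0 := hn.ne'
  have hEa : Ea = σ * (μL - μ) / μ := by
    field_simp at ha ⊢
    nlinarith [ha, sq_nonneg n]
  have hEb : Eb = σ * (μR + μ) / μ := by
    field_simp at hb ⊢
    nlinarith [hb]
  rw [hEa, hEb]
  field_simp
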